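/- arXiv:2106.00463 — 2 statements merged into one kernel-verified Lean document; each statement's English description precedes it below -/
import Mathlib

section
/- If X ~ N(0, I_d), then Pr[‖X‖₂ ≥ √(d + 2√(d·log(1/β)) + 2·log(1/β))] ≤ β for any β ∈ (0, 1). -/
open MeasureTheory ProbabilityTheory Real
open scoped ENNReal NNReal

private lemma gnt_log_le_half_sub_inv {x : ℝ} (hx : 1 ≤ x) :
    Real.log x ≤ (x - x⁻¹) / 2 := by
  rcases eq_or_lt_of_le hx with h | h
  · simp [← h]
  · have h1 := Real.self_lt_sinh_iff.mpr (Real.log_pos h)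
    rw [Real.sinh_log (by linarith)] at h1
    linarith

private lemma gnt_lintegral_pi_pow {μ : Measure ℝ} [IsProbabilityMeasure μ] (f : ℝ → ℝ≥0∞)
    (hf : Measurable f) (d : ℕ) :
    ∫⁻ x : Fin d → ℝ, ∏ i, f (x i) ∂(Measure.pi fun _ => μ) = (∫⁻ y, f y ∂μ) ^ d := by
  induction d with
  | zero => simp
  | succ n ih =>
    rw [← ((measurePreserving_piFinSuccAbove (fun _ : Fin (n+1) => μ) 0).symm).lintegral_comp_emb
      (MeasurableEquiv.measurableEmbedding _)]
    have heq : ∀ a : ℝ × (Fin n → ℝ), ∏ i : Fin (n+1),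
        f ((MeasurableEquiv.piFinSuccAbove (fun _ : Fin (n+1) => ℝ) 0).symm a i)
        = f a.1 * ∏ i : Fin n, f (a.2 i) := by
      intro a
      simp [MeasurableEquiv.piFinSuccAbove_symm_apply, Fin.insertNthEquiv,
        Fin.prod_univ_succ, Fin.insertNth_zero, Fin.zero_succAbove]
    simp_rw [heq]
    rw [lintegral_prod_mul (f := f) (g := fun y : Fin n → ℝ => ∏ i, f (y i))
      hf.aemeasurable
      ((Finset.measurable_prod _ fun i _ => hf.comp (measurable_pi_apply i)).aemeasurable)]
    rw [ih, pow_succ, mul_comm]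

private lemma gnt_lintegral_exp_sq_gaussian {c : ℝ} (hc : 0 < c) :
    ∫⁻ y, ENNReal.ofReal (rexp ((1 - c⁻¹) / 2 * y ^ 2)) ∂(gaussianReal 0 1)
      = ENNReal.ofReal (Real.sqrt c) := by
  have hmeas : Measurable fun y : ℝ => ENNReal.ofReal (rexp ((1 - c⁻¹) / 2 * y ^ 2)) := by
    fun_prop
  rw [gaussianReal_of_var_ne_zero 0 one_ne_zero,
    lintegral_withDensity_eq_lintegral_mul _ (measurable_gaussianPDF _ _) hmeas]
  have hpdf : ∀ x : ℝ, gaussianPDF 0 1 x = ENNReal.ofReal ((√(2 * π))⁻¹ * rexp (-x ^ 2 / 2)) := by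
    intro x
    simp [gaussianPDF, gaussianPDFReal]
  have key : ∀ x : ℝ, (gaussianPDF 0 1 x) * ENNReal.ofReal (rexp ((1 - c⁻¹) / 2 * x ^ 2))
      = ENNReal.ofReal ((√(2 * π))⁻¹ * rexp (-(c⁻¹ / 2) * x ^ 2)) := by
    intro x
    rw [hpdf x, ← ENNReal.ofReal_mul (by positivity)]
    congr 1
    rw [mul_assoc, ← Real.exp_add]
    congr 2
    field_simp
    ring
  simp_rw [Pi.mul_apply, key]
  have hint : Integrable (fun x : ℝ => (√(2 * π))⁻¹ * rexp (-(c⁻¹ / 2) * x ^ 2)) :=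
    (integrable_exp_neg_mul_sq (by positivity)).const_mul _
  rw [← ofReal_integral_eq_lintegral_ofReal hint (ae_of_all _ fun x => by positivity)]
  congr 1
  rw [integral_const_mul, integral_gaussian]
  have h2π : (0:ℝ) < 2 * π := by positivity
  rw [show π / (c⁻¹ / 2) = 2 * π * c by field_simp, Real.sqrt_mul h2π.le]
  field_simp

/-- If `X ~ N(0, I_d)` then `Pr[‖X‖₂ ≥ √(d + 2√(d log(1/β)) + 2 log(1/β))] ≤ β`
for any `β ∈ (0, 1)`. -/
theorem gaussian_norm_tail (d : ℕ) (hd : 1 ≤ d) (β : ℝ) (hβ0 : 0 < β) (hβ1 : β < 1) :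
    (Measure.pi (fun _ : Fin d => gaussianReal 0 1))
      {x : Fin d → ℝ |
        Real.sqrt (d + 2 * Real.sqrt (d * Real.log (1 / β)) + 2 * Real.log (1 / β))
          ≤ Real.sqrt (∑ i, x i ^ 2)}
      ≤ ENNReal.ofReal β := by
  set L := Real.log (1 / β) with hLdef
  have hL : 0 < L := by
    rw [hLdef, one_div, Real.log_inv]
    linarith [Real.log_neg hβ0 hβ1]
  have hd0 : (0:ℝ) < d := by exact_mod_cast hd
  set s := 2 * Real.sqrt (L / d) with hsdef
  have hs0 : 0 < s := by
    have := Real.sqrt_pos.mpr (div_pos hL hd0); rw [hsdef]; linarith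
  have hsd : Real.sqrt (↑d * L) = s * d / 2 := by
    have h2 : Real.sqrt (L / d) * d = Real.sqrt (L / d * d ^ 2) := by
      rw [Real.sqrt_mul (by positivity) ((d:ℝ) ^ 2), Real.sqrt_sq hd0.le]
    have h3 : L / (d:ℝ) * d ^ 2 = d * L := by field_simp
    rw [hsdef]
    rw [show 2 * Real.sqrt (L / d) * d / 2 = Real.sqrt (L / d) * d by ring, h2, h3]
  have hLs : L = s ^ 2 * d / 4 := by
    have h1 : Real.sqrt (L / d) ^ 2 = L / d := Real.sq_sqrt (by positivity)
    rw [hsdef, mul_pow, h1]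
    field_simp
    ring
  set c : ℝ := 1 + s with hcdef
  have hc1 : 1 < c := by rw [hcdef]; linarith
  have hc0 : 0 < c := by linarith
  set t : ℝ := (1 - c⁻¹) / 2 with htdef
  have ht0 : 0 < t := by
    rw [htdef]
    have : c⁻¹ < 1 := inv_lt_one_of_one_lt₀ hc1
    linarith
  set a : ℝ := ↑d + 2 * Real.sqrt (↑d * L) + 2 * L with hadef
  have ha0 : 0 < a := by
    have := Real.sqrt_nonneg ((d:ℝ) * L)
    rw [hadef]; linarith
  -- the key real inequality
  have hexp : (Real.sqrt c) ^ d ≤ β * rexp (t * a) := by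
    have hlog : Real.log c ≤ (c - c⁻¹) / 2 := gnt_log_le_half_sub_inv hc1.le
    have hβexp : β = rexp (-L) := by
      rw [hLdef, one_div, Real.log_inv, neg_neg, Real.exp_log hβ0]
    have hid : t * a - L = (d : ℝ) * ((c - c⁻¹) / 2) / 2 := by
      rw [htdef, hadef, hsd, hLs, hcdef]
      field_simp
      ring
    have hkey : (d : ℝ) * (Real.log c / 2) ≤ t * a - L := by
      rw [hid]
      have := mul_le_mul_of_nonneg_left hlog hd0.le
      linarith
    have h1 : (Real.sqrt c) ^ d = rexp ((d : ℝ) * (Real.log c / 2)) := by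
      rw [← Real.log_sqrt hc0.le, Real.exp_nat_mul, Real.exp_log (Real.sqrt_pos.mpr hc0)]
    rw [h1, hβexp, ← Real.exp_add]
    apply Real.exp_le_exp.mpr
    linarith
  -- Markov / Chernoff
  set F : (Fin d → ℝ) → ℝ≥0∞ := fun x => ENNReal.ofReal (rexp (t * ∑ i, x i ^ 2)) with hFdef
  have hFmeas : Measurable F := by
    apply Measurable.ennreal_ofReal
    apply Real.measurable_exp.comp
    apply Measurable.const_mul
    exact Finset.measurable_sum _ fun i _ => (measurable_pi_apply i).pow_const 2
  set ε : ℝ≥0∞ := ENNReal.ofReal (rexp (t * a)) with hεdef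
  have hε0 : ε ≠ 0 := by
    rw [hεdef]
    simp [ENNReal.ofReal_eq_zero, not_le, Real.exp_pos]
  have hεtop : ε ≠ ⊤ := ENNReal.ofReal_ne_top
  have hsub : {x : Fin d → ℝ |
      Real.sqrt (d + 2 * Real.sqrt (d * Real.log (1 / β)) + 2 * Real.log (1 / β))
        ≤ Real.sqrt (∑ i, x i ^ 2)} ⊆ {x | ε ≤ F x} := by
    intro x hx
    simp only [Set.mem_setOf_eq] at hx ⊢
    have hax : a ≤ ∑ i, x i ^ 2 :=
      (Real.sqrt_le_sqrt_iff (Finset.sum_nonneg fun i _ => sq_nonneg _)).mp hx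
    rw [hεdef, hFdef]
    exact ENNReal.ofReal_le_ofReal (Real.exp_le_exp.mpr
      (mul_le_mul_of_nonneg_left hax ht0.le))
  have hlint : ∫⁻ x, F x ∂(Measure.pi fun _ : Fin d => gaussianReal 0 1)
      = (ENNReal.ofReal (Real.sqrt c)) ^ d := by
    have hFeq : ∀ x : Fin d → ℝ, F x = ∏ i, ENNReal.ofReal (rexp ((1 - c⁻¹) / 2 * x i ^ 2)) := by
      intro x
      rw [hFdef]
      simp only
      rw [Finset.mul_sum, Real.exp_sum, ENNReal.ofReal_prod_of_nonneg
        (fun i _ => (Real.exp_pos _).le)]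
    simp_rw [hFeq]
    rw [gnt_lintegral_pi_pow (fun y => ENNReal.ofReal (rexp ((1 - c⁻¹) / 2 * y ^ 2)))
      (by fun_prop) d, gnt_lintegral_exp_sq_gaussian hc0]
  have hmarkov := mul_meas_ge_le_lintegral₀ (μ := Measure.pi fun _ : Fin d => gaussianReal 0 1) hFmeas.aemeasurable ε
  rw [hlint] at hmarkov
  have hfinal : ε * (Measure.pi fun _ : Fin d => gaussianReal 0 1) {x | ε ≤ F x}
      ≤ ε * ENNReal.ofReal β := by
    calc ε * (Measure.pi fun _ : Fin d => gaussianReal 0 1) {x | ε ≤ F x}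
        ≤ (ENNReal.ofReal (Real.sqrt c)) ^ d := hmarkov
      _ = ENNReal.ofReal ((Real.sqrt c) ^ d) := (ENNReal.ofReal_pow (Real.sqrt_nonneg c) d).symm
      _ ≤ ENNReal.ofReal (β * rexp (t * a)) := ENNReal.ofReal_le_ofReal hexp
      _ = ε * ENNReal.ofReal β := by
          rw [hεdef, ← ENNReal.ofReal_mul (Real.exp_pos _).le, mul_comm]
  refine le_trans (measure_mono hsub) ?_
  exact (ENNReal.mul_le_mul_iff_right hε0 hεtop).mp hfinal
end

section
/- For ε < 0.1 and δ < 0.1, for every dataset D, the in-neighborhood instance-optimal error satisfies R_in-nbr(D) ≥ c·w(D)/n for some absolute constant c > 0, where w(D) is the diameter of D. -/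
open MeasureTheory
open scoped ENNReal

/-- For `ε < 0.1`, `δ < 0.1`, the in-neighborhood instance-optimal error for mean estimation
satisfies `R_in-nbr(D) ≥ c·w(D)/n` for an absolute constant `c > 0`: for every `(ε,δ)`-DP
mechanism `M′` there is a dataset `D′` at Hamming distance `≤ 1` from `D` with
`supp(D′) ⊆ supp(D)` such that any error bound `ξ` achieved by `M′` on `D′` with
probability `≥ 2/3` satisfies `ξ ≥ c·w(D)/n`, where `w(D)` is the diameter of `D`. -/
theorem in_neighborhood_lower_bound :
    ∃ c : ℝ, 0 < c ∧
      ∀ (ε δ : ℝ), 0 ≤ ε → ε < 0.1 → 0 ≤ δ → δ < 0.1 →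
      ∀ (d n : ℕ), 1 ≤ n →
      ∀ (x : Fin n → EuclideanSpace ℝ (Fin d)) (w : ℝ),
        (∀ a b : Fin n, ‖x a - x b‖ ≤ w) →
        (∃ a b : Fin n, ‖x a - x b‖ = w) →
      ∀ (M : (Fin n → EuclideanSpace ℝ (Fin d)) → Measure (EuclideanSpace ℝ (Fin d))),
        (∀ D, IsProbabilityMeasure (M D)) →
        (∀ D D' : Fin n → EuclideanSpace ℝ (Fin d),
          (∃ i₀, ∀ k, k ≠ i₀ → D' k = D k) →
          ∀ E : Set (EuclideanSpace ℝ (Fin d)),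
            M D E ≤ ENNReal.ofReal (Real.exp ε) * M D' E + ENNReal.ofReal δ) →
      ∃ x' : Fin n → EuclideanSpace ℝ (Fin d),
        (∃ i₀, ∀ k, k ≠ i₀ → x' k = x k) ∧
        (∀ k, ∃ l, x' k = x l) ∧
        ∀ ξ : ℝ, 0 ≤ ξ →
          (2 / 3 : ℝ≥0∞) ≤ M x' {y | ‖y - (1 / n : ℝ) • ∑ k, x' k‖ ≤ ξ} →
          c * w / n ≤ ξ := by
  classical
  refine ⟨1/4, by norm_num, ?_⟩
  intro ε δ hε hε1 hδ hδ1 d n hn x w hw hex M hProb hDP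
  obtain ⟨a, b, hab⟩ := hex
  have hnpos : (0:ℝ) < n := by
    have : 0 < n := hn
    exact_mod_cast this
  by_cases hw0 : w ≤ 0
  · refine ⟨x, ⟨a, fun _ _ => rfl⟩, fun k => ⟨k, rfl⟩, fun ξ hξ _ => ?_⟩
    have : (1/4 : ℝ) * w / n ≤ 0 :=
      div_nonpos_of_nonpos_of_nonneg (by linarith) (le_of_lt hnpos)
    linarith
  push_neg at hw0
  have hexp : Real.exp ε ≤ 10/9 := by
    have h1 := Real.add_one_le_exp (-ε)
    have h2 : Real.exp ε * Real.exp (-ε) = 1 := by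
      rw [← Real.exp_add]; simp
    nlinarith [Real.exp_pos ε]
  set D1 : Fin n → EuclideanSpace ℝ (Fin d) := Function.update x a (x b) with hD1
  set μ0 : EuclideanSpace ℝ (Fin d) := (1/(n:ℝ)) • ∑ k, x k with hμ0
  set μ1 : EuclideanSpace ℝ (Fin d) := (1/(n:ℝ)) • ∑ k, D1 k with hμ1
  have hmeandiff : ‖μ1 - μ0‖ = w / n := by
    have hsum : (∑ k, D1 k) - ∑ k, x k = x b - x a := by
      rw [← Finset.sum_sub_distrib, Finset.sum_eq_single a]
      · simp [hD1]
      · intro k _ hk; simp [hD1, Function.update_of_ne hk]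
      · intro h; exact absurd (Finset.mem_univ a) h
    have hdiff : μ1 - μ0 = (1/(n:ℝ)) • (x b - x a) := by
      rw [hμ0, hμ1, ← smul_sub, hsum]
    rw [hdiff, norm_smul, norm_sub_rev, hab, Real.norm_eq_abs,
      abs_of_nonneg (by positivity : (0:ℝ) ≤ 1/(n:ℝ))]
    ring
  have key : ∀ ξ0 ξ1 : ℝ, 0 ≤ ξ0 → 0 ≤ ξ1 → ξ0 < 1/4 * w / n → ξ1 < 1/4 * w / n →
      (2/3 : ℝ≥0∞) ≤ M x {y | ‖y - μ0‖ ≤ ξ0} →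
      (2/3 : ℝ≥0∞) ≤ M D1 {y | ‖y - μ1‖ ≤ ξ1} → False := by
    intro ξ0 ξ1 hξ0 hξ1 hlt0 hlt1 hs0 hs1
    set B0 : Set (EuclideanSpace ℝ (Fin d)) := {y | ‖y - μ0‖ ≤ ξ0} with hB0
    set B1 : Set (EuclideanSpace ℝ (Fin d)) := {y | ‖y - μ1‖ ≤ ξ1} with hB1def
    have hB1meas : MeasurableSet B1 := by
      have : B1 = Metric.closedBall μ1 ξ1 := by
        ext y; simp [hB1def, Metric.mem_closedBall, dist_eq_norm]
      rw [this]; exact measurableSet_closedBall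
    have hwn : 0 < w / n := div_pos hw0 hnpos
    have hdisj : Disjoint B0 B1 := by
      rw [Set.disjoint_left]
      intro y h0 h1
      have h0' : ‖y - μ0‖ ≤ ξ0 := h0
      have h1' : ‖y - μ1‖ ≤ ξ1 := h1
      have ht := dist_triangle μ1 y μ0
      rw [dist_eq_norm, dist_eq_norm, dist_eq_norm, hmeandiff, norm_sub_rev μ1 y] at ht
      have h4 : 1/4 * w / (n:ℝ) = 1/4 * (w / n) := by ring
      rw [h4] at hlt0 hlt1
      linarith
    haveI := hProb x
    haveI := hProb D1
    have hunion : M x B0 + M x B1 ≤ 1 := by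
      rw [← measure_union hdisj hB1meas]
      calc M x (B0 ∪ B1) ≤ M x Set.univ := measure_mono (Set.subset_univ _)
        _ = 1 := measure_univ
    have hdp := hDP D1 x ⟨a, fun k hk => (Function.update_of_ne hk _ _).symm⟩ B1
    have hcomb : (2/3 : ℝ≥0∞) ≤ ENNReal.ofReal (Real.exp ε) * M x B1 + ENNReal.ofReal δ :=
      le_trans hs1 hdp
    have hfin0 : M x B0 ≠ ⊤ := measure_ne_top _ _
    have hfin1 : M x B1 ≠ ⊤ := measure_ne_top _ _
    have hq0 : (2/3 : ℝ) ≤ (M x B0).toReal := by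
      have h := ENNReal.toReal_mono hfin0 hs0
      rw [show ((2/3 : ℝ≥0∞)).toReal = (2/3 : ℝ) by norm_num] at h
      exact h
    have hq1 : (2/3 : ℝ) ≤ Real.exp ε * (M x B1).toReal + δ := by
      have hfinR : ENNReal.ofReal (Real.exp ε) * M x B1 + ENNReal.ofReal δ ≠ ⊤ :=
        ENNReal.add_ne_top.mpr
          ⟨ENNReal.mul_ne_top ENNReal.ofReal_ne_top hfin1, ENNReal.ofReal_ne_top⟩
      have h := ENNReal.toReal_mono hfinR hcomb
      rw [ENNReal.toReal_add (ENNReal.mul_ne_top ENNReal.ofReal_ne_top hfin1)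
          ENNReal.ofReal_ne_top, ENNReal.toReal_mul,
          ENNReal.toReal_ofReal (le_of_lt (Real.exp_pos ε)),
          ENNReal.toReal_ofReal hδ,
          show ((2/3 : ℝ≥0∞)).toReal = (2/3 : ℝ) by norm_num] at h
      exact h
    have hsumR : (M x B0).toReal + (M x B1).toReal ≤ 1 := by
      have h := ENNReal.toReal_mono (by norm_num : (1:ℝ≥0∞) ≠ ⊤) hunion
      rw [ENNReal.toReal_add hfin0 hfin1] at h
      simpa using h
    have hq1nn : (0:ℝ) ≤ (M x B1).toReal := ENNReal.toReal_nonneg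
    have hmul : Real.exp ε * (M x B1).toReal ≤ 10/9 * (M x B1).toReal :=
      mul_le_mul_of_nonneg_right hexp hq1nn
    linarith
  by_cases h0 : ∃ ξ0, 0 ≤ ξ0 ∧ ξ0 < 1/4 * w / n ∧
      (2/3 : ℝ≥0∞) ≤ M x {y | ‖y - μ0‖ ≤ ξ0}
  · refine ⟨D1, ⟨a, fun k hk => Function.update_of_ne hk _ _⟩, fun k => ?_, ?_⟩
    · by_cases hk : k = a
      · exact ⟨b, by simp [hD1, hk]⟩
      · exact ⟨k, Function.update_of_ne hk _ _⟩
    · intro ξ hξ hsucc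
      by_contra hcon
      push_neg at hcon
      obtain ⟨ξ0, hξ0, hlt0, hs0⟩ := h0
      exact key ξ0 ξ hξ0 hξ hlt0 hcon hs0 hsucc
  · refine ⟨x, ⟨a, fun _ _ => rfl⟩, fun k => ⟨k, rfl⟩, ?_⟩
    intro ξ hξ hsucc
    by_contra hcon
    push_neg at hcon
    exact h0 ⟨ξ, hξ, hcon, hsucc⟩
end
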